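/- Let r_{−1} be the complex Lie algebra on ℂ³ with brackets [e₁,e₃]=e₁, [e₂,e₃]=−e₂ (all other basis brackets zero). Then the space of derivations of r_{−1} has dimension 4, H²(r_{−1}; r_{−1}) has dimension 2, and H³(r_{−1}; r_{−1}) has dimension 1. -/
import Mathlib


noncomputable section

/-- The underlying vector space `ℂ³`. -/
abbrev E3 : Type := Fin 3 → ℂ

/-- The standard basis vectors of `ℂ³`. -/
def e1 : E3 := ![1, 0, 0]
def e2 : E3 := ![0, 1, 0]
def e3 : E3 := ![0, 0, 1]

/-- The unique antisymmetric bilinear bracket on `ℂ³` with `[e₁,e₂] = c12`,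
`[e₁,e₃] = c13`, `[e₂,e₃] = c23`. -/
def br (c12 c13 c23 : E3) (u v : E3) : E3 :=
  (u 0 * v 1 - u 1 * v 0) • c12 + (u 0 * v 2 - u 2 * v 0) • c13 +
    (u 1 * v 2 - u 2 * v 1) • c23

/-- The Jacobi identity for a bracket. -/
def Jacobi (b : E3 → E3 → E3) : Prop :=
  ∀ u v w : E3, b (b u v) w + b (b v w) u + b (b w u) v = 0

/-- `f : ℂ³ → ℂ³` is ℂ-linear. -/
def IsLin (f : E3 → E3) : Prop :=
  ∀ (a : ℂ) (x y : E3), f (a • x + y) = a • f x + f y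

/-- `φ : ℂ³ × ℂ³ → ℂ³` is ℂ-bilinear. -/
def IsBil (φ : E3 → E3 → E3) : Prop :=
  (∀ (a : ℂ) (x x' y : E3), φ (a • x + x') y = a • φ x y + φ x' y) ∧
  (∀ (a : ℂ) (x y y' : E3), φ x (a • y + y') = a • φ x y + φ x y')

/-- `φ` is alternating (as a 2-cochain). -/
def IsAlt2 (φ : E3 → E3 → E3) : Prop := ∀ x : E3, φ x x = 0

/-- `ψ : (ℂ³)³ → ℂ³` is ℂ-trilinear. -/
def IsTril (ψ : E3 → E3 → E3 → E3) : Prop :=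
  (∀ (a : ℂ) (x x' y z : E3), ψ (a • x + x') y z = a • ψ x y z + ψ x' y z) ∧
  (∀ (a : ℂ) (x y y' z : E3), ψ x (a • y + y') z = a • ψ x y z + ψ x y' z) ∧
  (∀ (a : ℂ) (x y z z' : E3), ψ x y (a • z + z') = a • ψ x y z + ψ x y z')

/-- `ψ` is alternating (as a 3-cochain): it vanishes whenever two arguments coincide. -/
def IsAlt3 (ψ : E3 → E3 → E3 → E3) : Prop :=
  ∀ x y : E3, ψ x x y = 0 ∧ ψ x y y = 0 ∧ ψ x y x = 0

/-- The coboundary of a 1-cochain `f`, with respect to the bracket `b`: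
`(δf)(x,y) = [x, f y] − [y, f x] − f [x,y]`. -/
def cb1 (b : E3 → E3 → E3) (f : E3 → E3) : E3 → E3 → E3 :=
  fun x y => b x (f y) - b y (f x) - f (b x y)

/-- The coboundary of a 2-cochain `φ`, with respect to the bracket `b`:
`(δφ)(x,y,z) = [x, φ(y,z)] − [y, φ(x,z)] + [z, φ(x,y)] − φ([x,y],z) + φ([x,z],y) − φ([y,z],x)`. -/
def cb2 (b : E3 → E3 → E3) (φ : E3 → E3 → E3) : E3 → E3 → E3 → E3 :=
  fun x y z =>
    b x (φ y z) - b y (φ x z) + b z (φ x y) - φ (b x y) z + φ (b x z) y - φ (b y z) x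

/-- `f` is a derivation of the bracket `b`. -/
def IsDeriv (b : E3 → E3 → E3) (f : E3 → E3) : Prop :=
  IsLin f ∧ ∀ x y : E3, f (b x y) = b (f x) y + b x (f y)

/-- The space of derivations of the bracket `b`.  (The set of derivations is already a
ℂ-subspace, so taking its span does not change it.) -/
def DerSpace (b : E3 → E3 → E3) : Submodule ℂ (E3 → E3) :=
  Submodule.span ℂ {f : E3 → E3 | IsDeriv b f}

/-- The space of 2-cocycles with adjoint coefficients. -/
def Z2 (b : E3 → E3 → E3) : Submodule ℂ (E3 → E3 → E3) :=
  Submodule.span ℂ {φ : E3 → E3 → E3 | IsBil φ ∧ IsAlt2 φ ∧ cb2 b φ = 0}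

/-- The space of 2-coboundaries with adjoint coefficients. -/
def B2 (b : E3 → E3 → E3) : Submodule ℂ (E3 → E3 → E3) :=
  Submodule.span ℂ {φ : E3 → E3 → E3 | ∃ f : E3 → E3, IsLin f ∧ φ = cb1 b f}

/-- The space of all 3-cochains (alternating trilinear maps); every 3-cochain is a
3-cocycle since `dim = 3`. -/
def C3 : Submodule ℂ (E3 → E3 → E3 → E3) :=
  Submodule.span ℂ {ψ : E3 → E3 → E3 → E3 | IsTril ψ ∧ IsAlt3 ψ}

/-- The space of 3-coboundaries with adjoint coefficients. -/
def B3 (b : E3 → E3 → E3) : Submodule ℂ (E3 → E3 → E3 → E3) :=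
  Submodule.span ℂ
    {ψ : E3 → E3 → E3 → E3 | ∃ φ : E3 → E3 → E3, IsBil φ ∧ IsAlt2 φ ∧ ψ = cb2 b φ}

/-- The dimension of `H²(L;L)`: cocycles modulo coboundaries. -/
def H2dim (b : E3 → E3 → E3) : ℕ :=
  Module.finrank ℂ (Z2 b ⧸ (B2 b).comap (Z2 b).subtype)

/-- The dimension of `H³(L;L)`: 3-cochains modulo coboundaries of 2-cochains. -/
def H3dim (b : E3 → E3 → E3) : ℕ :=
  Module.finrank ℂ (C3 ⧸ (B3 b).comap C3.subtype)

local notation "bb" => br 0 e1 (-e2)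

@[simp] lemma e1_0 : e1 0 = 1 := rfl
@[simp] lemma e1_1 : e1 1 = 0 := rfl
@[simp] lemma e1_2 : e1 2 = 0 := rfl
@[simp] lemma e2_0 : e2 0 = 0 := rfl
@[simp] lemma e2_1 : e2 1 = 1 := rfl
@[simp] lemma e2_2 : e2 2 = 0 := rfl
@[simp] lemma e3_0 : e3 0 = 0 := rfl
@[simp] lemma e3_1 : e3 1 = 0 := rfl
@[simp] lemma e3_2 : e3 2 = 1 := rfl

@[simp] lemma bb0 (u v : E3) : bb u v 0 = u 0 * v 2 - u 2 * v 0 := by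
  simp [br, e1, e2, e3]
@[simp] lemma bb1 (u v : E3) : bb u v 1 = u 2 * v 1 - u 1 * v 2 := by
  simp [br, e1, e2, e3]
@[simp] lemma bb2 (u v : E3) : bb u v 2 = 0 := by
  simp [br, e1, e2, e3]

lemma lin_zero {f : E3 → E3} (hf : IsLin f) : f 0 = 0 := by
  have h := hf 1 0 0; simp at h; exact h

lemma lin_smul {f : E3 → E3} (hf : IsLin f) (a : ℂ) (x : E3) : f (a • x) = a • f x := by
  have h := hf a x 0
  rw [add_zero, lin_zero hf, add_zero] at h
  exact h

lemma lin_add {f : E3 → E3} (hf : IsLin f) (x y : E3) : f (x + y) = f x + f y := by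
  have h := hf 1 x y; simpa using h

lemma vec_expand (x : E3) : x = x 0 • e1 + (x 1 • e2 + x 2 • e3) := by
  funext i; fin_cases i <;> simp [e1, e2, e3]

lemma lin_expand {f : E3 → E3} (hf : IsLin f) (x : E3) :
    f x = x 0 • f e1 + x 1 • f e2 + x 2 • f e3 := by
  conv_lhs => rw [vec_expand x]
  rw [hf, hf, lin_smul hf, add_assoc]

def dv : Fin 4 → (E3 → E3)
  | 0 => fun x => x 0 • e1
  | 1 => fun x => x 1 • e2
  | 2 => fun x => x 2 • e1
  | 3 => fun x => x 2 • e2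

lemma dv_deriv (i : Fin 4) : IsDeriv bb (dv i) := by
  fin_cases i <;>
  exact ⟨fun a x y => by funext j; fin_cases j <;> simp [dv] <;> ring,
    fun x y => by funext j; fin_cases j <;> simp [dv] <;> ring⟩

lemma bb13 : bb e1 e3 = e1 := by funext i; fin_cases i <;> simp
lemma bb23 : bb e2 e3 = -e2 := by funext i; fin_cases i <;> simp

lemma der_sub : {f : E3 → E3 | IsDeriv bb f} ⊆
    (Submodule.span ℂ (Set.range dv) : Submodule ℂ (E3 → E3)) := by
  intro f hf
  obtain ⟨hl, hd⟩ := hf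
  have h13 := hd e1 e3
  have h23 := hd e2 e3
  rw [bb13] at h13
  rw [bb23, show f (-e2) = (-1 : ℂ) • f e2 by rw [← lin_smul hl]; norm_num] at h23
  have c1 : f e1 1 = 0 := by have := congrFun h13 1; simp at this; linear_combination this/2
  have c2 : f e1 2 = 0 := by have := congrFun h13 2; simpa using this
  have c3 : f e3 2 = 0 := by have := congrFun h13 0; simp at this; linear_combination this
  have c4 : f e2 0 = 0 := by have := congrFun h23 0; simp at this; linear_combination -this/2
  have c5 : f e2 2 = 0 := by have := congrFun h23 2; simpa using this
  have hfe : f = f e1 0 • dv 0 + f e2 1 • dv 1 + f e3 0 • dv 2 + f e3 1 • dv 3 := by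
    funext x
    rw [show f x = x 0 • f e1 + x 1 • f e2 + x 2 • f e3 from lin_expand hl x]
    funext j
    fin_cases j <;> simp [dv, c1, c2, c3, c4, c5] <;> ring
  rw [hfe]
  have m : ∀ i : Fin 4, dv i ∈ Submodule.span ℂ (Set.range dv) :=
    fun i => Submodule.subset_span ⟨i, rfl⟩
  exact Submodule.add_mem _ (Submodule.add_mem _ (Submodule.add_mem _
    (Submodule.smul_mem _ _ (m 0)) (Submodule.smul_mem _ _ (m 1)))
    (Submodule.smul_mem _ _ (m 2))) (Submodule.smul_mem _ _ (m 3))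

lemma dv_li : LinearIndependent ℂ dv := by
  rw [Fintype.linearIndependent_iff]
  intro g h
  have h0 := congrFun (congrFun h e1) 0
  have h1 := congrFun (congrFun h e2) 1
  have h2 := congrFun (congrFun h e3) 0
  have h3 := congrFun (congrFun h e3) 1
  simp [Fin.sum_univ_four, dv] at h0 h1 h2 h3
  intro i; fin_cases i <;> simp_all

lemma der_rank : Module.finrank ℂ (DerSpace bb) = 4 := by
  have hspan : DerSpace bb = Submodule.span ℂ (Set.range dv) := by
    apply le_antisymm
    · exact Submodule.span_le.2 der_sub
    · apply Submodule.span_le.2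
      rintro _ ⟨i, rfl⟩
      exact Submodule.subset_span (dv_deriv i)
  rw [hspan, finrank_span_eq_card dv_li]
  rfl

-- bilinear helper lemmas
section bil
variable {φ : E3 → E3 → E3}

lemma bil_zl (hb : IsBil φ) (y : E3) : φ 0 y = 0 := by
  have h := hb.1 1 0 0 y; simp at h; exact h
lemma bil_zr (hb : IsBil φ) (x : E3) : φ x 0 = 0 := by
  have h := hb.2 1 x 0 0; simp at h; exact h
lemma bil_sl (hb : IsBil φ) (a : ℂ) (x y : E3) : φ (a • x) y = a • φ x y := by
  have h := hb.1 a x 0 y; rw [add_zero, bil_zl hb, add_zero] at h; exact h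
lemma bil_sr (hb : IsBil φ) (a : ℂ) (x y : E3) : φ x (a • y) = a • φ x y := by
  have h := hb.2 a x y 0; rw [add_zero, bil_zr hb, add_zero] at h; exact h
lemma bil_al (hb : IsBil φ) (x x' y : E3) : φ (x + x') y = φ x y + φ x' y := by
  have h := hb.1 1 x x' y; simpa using h
lemma bil_ar (hb : IsBil φ) (x y y' : E3) : φ x (y + y') = φ x y + φ x y' := by
  have h := hb.2 1 x y y'; simpa using h

lemma alt_swap (hb : IsBil φ) (ha : IsAlt2 φ) (x y : E3) : φ y x = -φ x y := by
  have h := ha (x + y)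
  rw [bil_al hb, bil_ar hb, bil_ar hb, ha, ha] at h
  rw [eq_neg_iff_add_eq_zero]
  rw [zero_add, add_zero] at h
  linear_combination (norm := abel) h

lemma bil_expand (hb : IsBil φ) (ha : IsAlt2 φ) (u v : E3) :
    φ u v = (u 0 * v 1 - u 1 * v 0) • φ e1 e2 + (u 0 * v 2 - u 2 * v 0) • φ e1 e3
      + (u 1 * v 2 - u 2 * v 1) • φ e2 e3 := by
  conv_lhs => rw [vec_expand u, vec_expand v]
  simp only [bil_al hb, bil_ar hb, bil_sl hb, bil_sr hb, ha,
    alt_swap hb ha e1 e2, alt_swap hb ha e1 e3, alt_swap hb ha e2 e3]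
  simp only [ha e1, ha e2, ha e3]
  module
end bil

def zv : Fin 7 → (E3 → E3 → E3)
  | 0 => fun u v => (u 1 * v 2 - u 2 * v 1) • e1
  | 1 => fun u v => (u 1 * v 2 - u 2 * v 1) • e2
  | 2 => fun u v => (u 1 * v 2 - u 2 * v 1) • e3 + (u 0 * v 1 - u 1 * v 0) • e1
  | 3 => fun u v => (u 0 * v 2 - u 2 * v 0) • e1
  | 4 => fun u v => (u 0 * v 2 - u 2 * v 0) • e2
  | 5 => fun u v => (u 0 * v 2 - u 2 * v 0) • e3 - (u 0 * v 1 - u 1 * v 0) • e2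
  | 6 => fun u v => (u 0 * v 1 - u 1 * v 0) • e3

lemma zv_mem (i : Fin 7) : zv i ∈ {φ : E3 → E3 → E3 | IsBil φ ∧ IsAlt2 φ ∧ cb2 bb φ = 0} := by
  fin_cases i <;>
  exact ⟨⟨fun a x x' y => by funext j; fin_cases j <;> simp [zv] <;> ring,
          fun a x y y' => by funext j; fin_cases j <;> simp [zv] <;> ring⟩,
         fun x => by funext j; fin_cases j <;> simp [zv] <;> ring,
         by funext x y z; funext j; fin_cases j <;> simp [cb2, zv] <;> ring⟩

lemma bb12 : bb e1 e2 = 0 := by funext i; fin_cases i <;> simp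

lemma z2_sub : {φ : E3 → E3 → E3 | IsBil φ ∧ IsAlt2 φ ∧ cb2 bb φ = 0} ⊆
    (Submodule.span ℂ (Set.range zv) : Submodule ℂ (E3 → E3 → E3)) := by
  rintro φ ⟨hb, ha, hc⟩
  have k0 : φ (bb e1 e2) e3 = 0 := by rw [bb12]; exact bil_zl hb e3
  have k1 : φ (bb e1 e3) e2 = φ e1 e2 := by rw [bb13]
  have k2 : φ (bb e2 e3) e1 = φ e1 e2 := by
    rw [bb23, show (-e2 : E3) = (-1 : ℂ) • e2 by module, bil_sl hb,
      alt_swap hb ha e1 e2]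
    module
  have hval : cb2 bb φ e1 e2 e3 = 0 := by rw [hc]; rfl
  rw [show cb2 bb φ e1 e2 e3 = bb e1 (φ e2 e3) - bb e2 (φ e1 e3) + bb e3 (φ e1 e2)
       - φ (bb e1 e2) e3 + φ (bb e1 e3) e2 - φ (bb e2 e3) e1 from rfl,
    k0, k1, k2] at hval
  have R1 : φ e2 e3 2 = φ e1 e2 0 := by
    have := congrFun hval 0; simp at this; linear_combination this
  have R2 : φ e1 e3 2 = -(φ e1 e2 1) := by
    have := congrFun hval 1; simp at this; linear_combination this
  have hfe : φ = φ e2 e3 0 • zv 0 + φ e2 e3 1 • zv 1 + φ e2 e3 2 • zv 2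
      + φ e1 e3 0 • zv 3 + φ e1 e3 1 • zv 4 + φ e1 e3 2 • zv 5 + φ e1 e2 2 • zv 6 := by
    funext u v
    rw [bil_expand hb ha u v]
    funext j
    fin_cases j
    · simp [zv]; linear_combination (u 1 * v 0 - u 0 * v 1) * R1
    · simp [zv]; linear_combination (u 0 * v 1 - u 1 * v 0) * R2
    · simp [zv]; ring
  rw [hfe]
  have mz : ∀ i : Fin 7, zv i ∈ Submodule.span ℂ (Set.range zv) :=
    fun i => Submodule.subset_span ⟨i, rfl⟩
  exact Submodule.add_mem _ (Submodule.add_mem _ (Submodule.add_mem _ (Submodule.add_mem _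
    (Submodule.add_mem _ (Submodule.add_mem _ (Submodule.smul_mem _ _ (mz 0))
    (Submodule.smul_mem _ _ (mz 1))) (Submodule.smul_mem _ _ (mz 2)))
    (Submodule.smul_mem _ _ (mz 3))) (Submodule.smul_mem _ _ (mz 4)))
    (Submodule.smul_mem _ _ (mz 5))) (Submodule.smul_mem _ _ (mz 6))

lemma hZ2 : Z2 bb = Submodule.span ℂ (Set.range zv) := by
  apply le_antisymm
  · exact Submodule.span_le.2 z2_sub
  · exact Submodule.span_le.2 (by rintro _ ⟨i, rfl⟩; exact Submodule.subset_span (zv_mem i))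

def bv : Fin 5 → (E3 → E3 → E3)
  | 0 => fun u v => (2 * (u 1 * v 2 - u 2 * v 1)) • e1
  | 1 => fun u v => (-2 * (u 0 * v 2 - u 2 * v 0)) • e2
  | 2 => fun u v => (u 0 * v 1 - u 1 * v 0) • e2 - (u 0 * v 2 - u 2 * v 0) • e3
  | 3 => fun u v => (u 0 * v 1 - u 1 * v 0) • e1 + (u 1 * v 2 - u 2 * v 1) • e3
  | 4 => fun u v => (u 0 * v 2 - u 2 * v 0) • e1 - (u 1 * v 2 - u 2 * v 1) • e2

def fw : Fin 5 → (E3 → E3)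
  | 0 => fun x => x 1 • e1
  | 1 => fun x => x 0 • e2
  | 2 => fun x => x 0 • e3
  | 3 => fun x => x 1 • e3
  | 4 => fun x => x 2 • e3

lemma fw_lin (i : Fin 5) : IsLin (fw i) := by
  fin_cases i <;>
  exact fun a x y => by funext j; fin_cases j <;> simp [fw] <;> ring

lemma bv_cb (i : Fin 5) : bv i = cb1 bb (fw i) := by
  fin_cases i <;>
  exact by funext u v; funext j; fin_cases j <;> simp [cb1, fw, bv] <;> ring

lemma bv_mem (i : Fin 5) : bv i ∈ {φ : E3 → E3 → E3 | ∃ f, IsLin f ∧ φ = cb1 bb f} :=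
  ⟨fw i, fw_lin i, bv_cb i⟩

lemma b2_sub : {φ : E3 → E3 → E3 | ∃ f, IsLin f ∧ φ = cb1 bb f} ⊆
    (Submodule.span ℂ (Set.range bv) : Submodule ℂ (E3 → E3 → E3)) := by
  rintro _ ⟨f, hl, rfl⟩
  have hfe : cb1 bb f = f e2 0 • bv 0 + f e1 1 • bv 1 + f e1 2 • bv 2
      + f e2 2 • bv 3 + f e3 2 • bv 4 := by
    funext u v
    show bb u (f v) - bb v (f u) - f (bb u v) = _
    rw [lin_expand hl (f := f) u, lin_expand hl v, lin_expand hl (bb u v)]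
    funext j
    fin_cases j <;> simp [bv] <;> ring
  rw [hfe]
  have mb : ∀ i : Fin 5, bv i ∈ Submodule.span ℂ (Set.range bv) :=
    fun i => Submodule.subset_span ⟨i, rfl⟩
  exact Submodule.add_mem _ (Submodule.add_mem _ (Submodule.add_mem _ (Submodule.add_mem _
    (Submodule.smul_mem _ _ (mb 0)) (Submodule.smul_mem _ _ (mb 1)))
    (Submodule.smul_mem _ _ (mb 2))) (Submodule.smul_mem _ _ (mb 3)))
    (Submodule.smul_mem _ _ (mb 4))

lemma hB2 : B2 bb = Submodule.span ℂ (Set.range bv) := by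
  apply le_antisymm
  · exact Submodule.span_le.2 b2_sub
  · exact Submodule.span_le.2 (by rintro _ ⟨i, rfl⟩; exact Submodule.subset_span (bv_mem i))

lemma zv_li : LinearIndependent ℂ zv := by
  rw [Fintype.linearIndependent_iff]
  intro g h
  have h00 := congrFun (congrFun (congrFun h e2) e3) 0
  have h01 := congrFun (congrFun (congrFun h e2) e3) 1
  have h02 := congrFun (congrFun (congrFun h e2) e3) 2
  have h10 := congrFun (congrFun (congrFun h e1) e3) 0
  have h11 := congrFun (congrFun (congrFun h e1) e3) 1
  have h12 := congrFun (congrFun (congrFun h e1) e3) 2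
  have h22 := congrFun (congrFun (congrFun h e1) e2) 2
  simp [Fin.sum_univ_seven, zv] at h00 h01 h02 h10 h11 h12 h22
  intro i; fin_cases i <;> simp_all

lemma bv_li : LinearIndependent ℂ bv := by
  rw [Fintype.linearIndependent_iff]
  intro g h
  have h00 := congrFun (congrFun (congrFun h e2) e3) 0
  have h01 := congrFun (congrFun (congrFun h e2) e3) 1
  have h02 := congrFun (congrFun (congrFun h e2) e3) 2
  have h11 := congrFun (congrFun (congrFun h e1) e3) 1
  have h12 := congrFun (congrFun (congrFun h e1) e3) 2
  simp [Fin.sum_univ_five, bv] at h00 h01 h02 h11 h12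
  intro i; fin_cases i <;> simp_all

lemma B2_le_Z2 : B2 bb ≤ Z2 bb := by
  rw [hB2, hZ2]
  apply Submodule.span_le.2
  rintro _ ⟨i, rfl⟩
  have mz : ∀ j : Fin 7, zv j ∈ Submodule.span ℂ (Set.range zv) :=
    fun j => Submodule.subset_span ⟨j, rfl⟩
  fin_cases i
  · show bv 0 ∈ _
    rw [show bv 0 = (2 : ℂ) • zv 0 by funext u v j; fin_cases j <;> simp [bv, zv] <;> ring]
    exact Submodule.smul_mem _ _ (mz 0)
  · show bv 1 ∈ _
    rw [show bv 1 = (-2 : ℂ) • zv 4 by funext u v j; fin_cases j <;> simp [bv, zv] <;> ring]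
    exact Submodule.smul_mem _ _ (mz 4)
  · show bv 2 ∈ _
    rw [show bv 2 = -zv 5 by funext u v j; fin_cases j <;> simp [bv, zv] <;> ring]
    exact Submodule.neg_mem _ (mz 5)
  · show bv 3 ∈ _
    rw [show bv 3 = zv 2 by funext u v j; fin_cases j <;> simp [bv, zv] <;> ring]
    exact mz 2
  · show bv 4 ∈ _
    rw [show bv 4 = zv 3 - zv 1 by funext u v j; fin_cases j <;> simp [bv, zv] <;> ring]
    exact Submodule.sub_mem _ (mz 3) (mz 1)

set_option maxHeartbeats 1000000 in
set_option synthInstance.maxHeartbeats 200000 in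
lemma h2_eq : H2dim bb = 2 := by
  have hfinZ : FiniteDimensional ℂ (Z2 bb) := by
    rw [hZ2]; exact FiniteDimensional.span_of_finite ℂ (Set.finite_range zv)
  have hrZ : Module.finrank ℂ (Z2 bb) = 7 := by
    rw [hZ2, finrank_span_eq_card zv_li]; rfl
  have hrB : Module.finrank ℂ ((B2 bb).comap (Z2 bb).subtype) = 5 := by
    have e := Submodule.comapSubtypeEquivOfLe B2_le_Z2
    rw [e.finrank_eq, hB2, finrank_span_eq_card bv_li]; rfl
  have key := Submodule.finrank_quotient_add_finrank ((B2 bb).comap (Z2 bb).subtype)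
  rw [hrB, hrZ] at key
  unfold H2dim
  omega

-- trilinear helpers
section tril
variable {ψ : E3 → E3 → E3 → E3}

lemma tri_zl (ht : IsTril ψ) (y z : E3) : ψ 0 y z = 0 := by
  have h := ht.1 1 0 0 y z; simp at h; exact h
lemma tri_zm (ht : IsTril ψ) (x z : E3) : ψ x 0 z = 0 := by
  have h := ht.2.1 1 x 0 0 z; simp at h; exact h
lemma tri_zr (ht : IsTril ψ) (x y : E3) : ψ x y 0 = 0 := by
  have h := ht.2.2 1 x y 0 0; simp at h; exact h
lemma tri_sl (ht : IsTril ψ) (a : ℂ) (x y z : E3) : ψ (a • x) y z = a • ψ x y z := by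
  have h := ht.1 a x 0 y z; rw [add_zero, tri_zl ht, add_zero] at h; exact h
lemma tri_sm (ht : IsTril ψ) (a : ℂ) (x y z : E3) : ψ x (a • y) z = a • ψ x y z := by
  have h := ht.2.1 a x y 0 z; rw [add_zero, tri_zm ht, add_zero] at h; exact h
lemma tri_sr (ht : IsTril ψ) (a : ℂ) (x y z : E3) : ψ x y (a • z) = a • ψ x y z := by
  have h := ht.2.2 a x y z 0; rw [add_zero, tri_zr ht, add_zero] at h; exact h
lemma tri_al (ht : IsTril ψ) (x x' y z : E3) : ψ (x + x') y z = ψ x y z + ψ x' y z := by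
  have h := ht.1 1 x x' y z; simpa using h
lemma tri_am (ht : IsTril ψ) (x y y' z : E3) : ψ x (y + y') z = ψ x y z + ψ x y' z := by
  have h := ht.2.1 1 x y y' z; simpa using h
lemma tri_ar (ht : IsTril ψ) (x y z z' : E3) : ψ x y (z + z') = ψ x y z + ψ x y z' := by
  have h := ht.2.2 1 x y z z'; simpa using h

lemma swap12 (ht : IsTril ψ) (ha : IsAlt3 ψ) (x y z : E3) : ψ y x z = -ψ x y z := by
  have h := (ha (x + y) z).1
  rw [tri_al ht, tri_am ht, tri_am ht, (ha x z).1, (ha y z).1, zero_add, add_zero] at h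
  exact eq_neg_of_add_eq_zero_right h

lemma swap23 (ht : IsTril ψ) (ha : IsAlt3 ψ) (x y z : E3) : ψ x z y = -ψ x y z := by
  have h := (ha x (y + z)).2.1
  rw [tri_am ht, tri_ar ht, tri_ar ht, (ha x y).2.1, (ha x z).2.1, zero_add, add_zero] at h
  exact eq_neg_of_add_eq_zero_right h

lemma swap13 (ht : IsTril ψ) (ha : IsAlt3 ψ) (x y z : E3) : ψ z y x = -ψ x y z := by
  have h := (ha (x + z) y).2.2
  rw [tri_al ht, tri_ar ht, tri_ar ht, (ha x y).2.2, (ha z y).2.2, zero_add, add_zero] at h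
  exact eq_neg_of_add_eq_zero_right h

def det3 (x y z : E3) : ℂ :=
  x 0 * (y 1 * z 2 - y 2 * z 1) - x 1 * (y 0 * z 2 - y 2 * z 0) + x 2 * (y 0 * z 1 - y 1 * z 0)

lemma tri_expand (ht : IsTril ψ) (ha : IsAlt3 ψ) (x y z : E3) :
    ψ x y z = det3 x y z • ψ e1 e2 e3 := by
  have A : ∀ x y : E3, ψ x x y = 0 := fun x y => (ha x y).1
  have B : ∀ x y : E3, ψ x y y = 0 := fun x y => (ha x y).2.1
  have C : ∀ x y : E3, ψ x y x = 0 := fun x y => (ha x y).2.2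
  have s1 : ψ e2 e1 e3 = -ψ e1 e2 e3 := swap12 ht ha e1 e2 e3
  have s2 : ψ e1 e3 e2 = -ψ e1 e2 e3 := swap23 ht ha e1 e2 e3
  have s3 : ψ e3 e2 e1 = -ψ e1 e2 e3 := swap13 ht ha e1 e2 e3
  have s4 : ψ e2 e3 e1 = ψ e1 e2 e3 := by
    rw [swap13 ht ha e1 e3 e2, s2]; exact neg_neg _
  have s5 : ψ e3 e1 e2 = ψ e1 e2 e3 := by
    rw [swap12 ht ha e1 e3 e2, s2]; exact neg_neg _
  conv_lhs => rw [vec_expand x, vec_expand y, vec_expand z]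
  simp only [tri_al ht, tri_am ht, tri_ar ht, tri_sl ht, tri_sm ht, tri_sr ht,
    A, B, C, s1, s2, s3, s4, s5, det3]
  module
end tril

-- bb bilinearity
lemma bbl (a : ℂ) (x x' y : E3) : bb (a • x + x') y = a • bb x y + bb x' y := by
  funext j; fin_cases j <;> simp <;> ring
lemma bbr (a : ℂ) (x y y' : E3) : bb x (a • y + y') = a • bb x y + bb x y' := by
  funext j; fin_cases j <;> simp <;> ring
lemma bbsl (a : ℂ) (x y : E3) : bb (a • x) y = a • bb x y := by
  funext j; fin_cases j <;> simp <;> ring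
lemma bbsr (a : ℂ) (x y : E3) : bb x (a • y) = a • bb x y := by
  funext j; fin_cases j <;> simp <;> ring
lemma bb_alt (x : E3) : bb x x = 0 := by
  funext j; fin_cases j <;> simp <;> ring
lemma bb_swap (x y : E3) : bb y x = -bb x y := by
  funext j; fin_cases j <;> simp <;> ring
lemma bb_zr (x : E3) : bb x 0 = 0 := by
  funext j; fin_cases j <;> simp
lemma bb_zl (x : E3) : bb 0 x = 0 := by
  funext j; fin_cases j <;> simp

section cbtwo
variable {φ : E3 → E3 → E3}

lemma cb2_tril (hb : IsBil φ) : IsTril (cb2 bb φ) := by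
  refine ⟨fun a x x' y z => ?_, fun a x y y' z => ?_, fun a x y z z' => ?_⟩ <;>
  · simp only [cb2]
    simp only [bbl, bbr, hb.1, hb.2]
    module

lemma cb2_alt (hb : IsBil φ) (ha : IsAlt2 φ) : IsAlt3 (cb2 bb φ) := by
  intro x y
  refine ⟨?_, ?_, ?_⟩ <;> simp only [cb2]
  · rw [ha x, bb_alt x, bil_zl hb, bb_zr]
    abel
  · rw [ha y, bb_alt y, bil_zl hb, bb_zr]
    abel
  · rw [show φ y x = -φ x y from alt_swap hb ha x y,
      show (-φ x y : E3) = (-1 : ℂ) • φ x y by module, bbsr,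
      ha x, bb_zr, bb_alt x, bil_zl hb,
      show bb y x = -bb x y from bb_swap x y,
      show (-bb x y : E3) = (-1 : ℂ) • bb x y by module, bil_sl hb]
    module
end cbtwo

def cv : Fin 3 → (E3 → E3 → E3 → E3)
  | 0 => fun x y z => det3 x y z • e1
  | 1 => fun x y z => det3 x y z • e2
  | 2 => fun x y z => det3 x y z • e3

lemma cv_mem (i : Fin 3) : cv i ∈ {ψ : E3 → E3 → E3 → E3 | IsTril ψ ∧ IsAlt3 ψ} := by
  fin_cases i <;>
  exact ⟨⟨fun a x x' y z => by funext j; fin_cases j <;> simp [cv, det3] <;> ring,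
          fun a x y y' z => by funext j; fin_cases j <;> simp [cv, det3] <;> ring,
          fun a x y z z' => by funext j; fin_cases j <;> simp [cv, det3] <;> ring⟩,
    fun x y => ⟨by funext j; fin_cases j <;> simp [cv, det3] <;> ring,
      by funext j; fin_cases j <;> simp [cv, det3] <;> ring,
      by funext j; fin_cases j <;> simp [cv, det3] <;> ring⟩⟩

lemma c3_sub : {ψ : E3 → E3 → E3 → E3 | IsTril ψ ∧ IsAlt3 ψ} ⊆
    (Submodule.span ℂ (Set.range cv) : Submodule ℂ (E3 → E3 → E3 → E3)) := by
  rintro ψ ⟨ht, ha⟩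
  have hfe : ψ = ψ e1 e2 e3 0 • cv 0 + ψ e1 e2 e3 1 • cv 1 + ψ e1 e2 e3 2 • cv 2 := by
    funext x y z
    rw [tri_expand ht ha x y z]
    funext j
    fin_cases j <;> simp [cv] <;> ring
  rw [hfe]
  have mc : ∀ i : Fin 3, cv i ∈ Submodule.span ℂ (Set.range cv) :=
    fun i => Submodule.subset_span ⟨i, rfl⟩
  exact Submodule.add_mem _ (Submodule.add_mem _ (Submodule.smul_mem _ _ (mc 0))
    (Submodule.smul_mem _ _ (mc 1))) (Submodule.smul_mem _ _ (mc 2))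

lemma hC3 : C3 = Submodule.span ℂ (Set.range cv) := by
  apply le_antisymm
  · exact Submodule.span_le.2 c3_sub
  · exact Submodule.span_le.2 (by rintro _ ⟨i, rfl⟩; exact Submodule.subset_span (cv_mem i))

def pv : Fin 2 → (E3 → E3 → E3)
  | 0 => fun u v => (u 1 * v 2 - u 2 * v 1) • e3
  | 1 => fun u v => (u 0 * v 2 - u 2 * v 0) • e3

def wv : Fin 2 → (E3 → E3 → E3 → E3)
  | 0 => fun x y z => det3 x y z • e1
  | 1 => fun x y z => det3 x y z • e2

lemma pv_bil (i : Fin 2) : IsBil (pv i) := by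
  fin_cases i <;>
  exact ⟨fun a x x' y => by funext j; fin_cases j <;> simp [pv] <;> ring,
    fun a x y y' => by funext j; fin_cases j <;> simp [pv] <;> ring⟩

lemma pv_alt (i : Fin 2) : IsAlt2 (pv i) := by
  fin_cases i <;> exact fun x => by funext j; fin_cases j <;> simp [pv] <;> ring

lemma wv_cb (i : Fin 2) : wv i = cb2 bb (pv i) := by
  fin_cases i <;>
  exact by funext x y z; funext j; fin_cases j <;> simp [cb2, wv, pv, det3] <;> ring

lemma wv_mem (i : Fin 2) :
    wv i ∈ {ψ : E3 → E3 → E3 → E3 | ∃ φ, IsBil φ ∧ IsAlt2 φ ∧ ψ = cb2 bb φ} :=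
  ⟨pv i, pv_bil i, pv_alt i, wv_cb i⟩

lemma b3_sub : {ψ : E3 → E3 → E3 → E3 | ∃ φ, IsBil φ ∧ IsAlt2 φ ∧ ψ = cb2 bb φ} ⊆
    (Submodule.span ℂ (Set.range wv) : Submodule ℂ (E3 → E3 → E3 → E3)) := by
  rintro _ ⟨φ, hb, ha, rfl⟩
  have ht := cb2_tril hb
  have hal := cb2_alt hb ha
  have hval2 : cb2 bb φ e1 e2 e3 2 = 0 := by
    have k1 : φ (bb e1 e3) e2 = φ e1 e2 := by rw [bb13]
    have k2 : φ (bb e2 e3) e1 = φ e1 e2 := by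
      rw [bb23, show (-e2 : E3) = (-1 : ℂ) • e2 by module, bil_sl hb,
        alt_swap hb ha e1 e2]
      module
    show (bb e1 (φ e2 e3) - bb e2 (φ e1 e3) + bb e3 (φ e1 e2)
      - φ (bb e1 e2) e3 + φ (bb e1 e3) e2 - φ (bb e2 e3) e1) 2 = 0
    rw [k1, k2, bb12, bil_zl hb]
    simp
  have hfe : cb2 bb φ = cb2 bb φ e1 e2 e3 0 • wv 0 + cb2 bb φ e1 e2 e3 1 • wv 1 := by
    funext x y z
    rw [tri_expand ht hal x y z]
    funext j
    fin_cases j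
    · simp [wv]; ring
    · simp [wv]; ring
    · simp [wv]
      exact Or.inr hval2
  rw [hfe]
  have mw : ∀ i : Fin 2, wv i ∈ Submodule.span ℂ (Set.range wv) :=
    fun i => Submodule.subset_span ⟨i, rfl⟩
  exact Submodule.add_mem _ (Submodule.smul_mem _ _ (mw 0)) (Submodule.smul_mem _ _ (mw 1))

lemma hB3 : B3 bb = Submodule.span ℂ (Set.range wv) := by
  apply le_antisymm
  · exact Submodule.span_le.2 b3_sub
  · exact Submodule.span_le.2 (by rintro _ ⟨i, rfl⟩; exact Submodule.subset_span (wv_mem i))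

lemma cv_li : LinearIndependent ℂ cv := by
  rw [Fintype.linearIndependent_iff]
  intro g h
  have h0 := congrFun (congrFun (congrFun (congrFun h e1) e2) e3) 0
  have h1 := congrFun (congrFun (congrFun (congrFun h e1) e2) e3) 1
  have h2 := congrFun (congrFun (congrFun (congrFun h e1) e2) e3) 2
  simp [Fin.sum_univ_three, cv, det3] at h0 h1 h2
  intro i; fin_cases i <;> simp_all

lemma wv_li : LinearIndependent ℂ wv := by
  rw [Fintype.linearIndependent_iff]
  intro g h
  have h0 := congrFun (congrFun (congrFun (congrFun h e1) e2) e3) 0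
  have h1 := congrFun (congrFun (congrFun (congrFun h e1) e2) e3) 1
  simp [Fin.sum_univ_two, wv, det3] at h0 h1
  intro i; fin_cases i <;> simp_all

lemma B3_le_C3 : B3 bb ≤ C3 := by
  rw [hB3, hC3]
  apply Submodule.span_le.2
  rintro _ ⟨i, rfl⟩
  fin_cases i
  · exact Submodule.subset_span ⟨0, rfl⟩
  · exact Submodule.subset_span ⟨1, rfl⟩

set_option maxHeartbeats 1000000 in
set_option synthInstance.maxHeartbeats 200000 in
lemma h3_eq : H3dim bb = 1 := by
  have hfinC : FiniteDimensional ℂ C3 := by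
    rw [hC3]; exact FiniteDimensional.span_of_finite ℂ (Set.finite_range cv)
  have hrC : Module.finrank ℂ C3 = 3 := by
    rw [hC3, finrank_span_eq_card cv_li]; rfl
  have hrB : Module.finrank ℂ ((B3 bb).comap C3.subtype) = 2 := by
    have e := Submodule.comapSubtypeEquivOfLe B3_le_C3
    rw [e.finrank_eq, hB3, finrank_span_eq_card wv_li]; rfl
  have key := Submodule.finrank_quotient_add_finrank ((B3 bb).comap C3.subtype)
  rw [hrB, hrC] at key
  unfold H3dim
  omega
/-- For the Lie algebra `r₋₁` with `[e₁,e₃]=e₁`, `[e₂,e₃]=−e₂`: the space of derivations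
has dimension 4, `H²(r₋₁;r₋₁)` has dimension 2, and `H³(r₋₁;r₋₁)` has dimension 1. -/
theorem r_neg_one_cohomology :
    Module.finrank ℂ (DerSpace (br 0 e1 (-e2))) = 4 ∧
    H2dim (br 0 e1 (-e2)) = 2 ∧
    H3dim (br 0 e1 (-e2)) = 1 := by
  exact ⟨der_rank, h2_eq, h3_eq⟩
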